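/- For every integer n ≥ 0, Y(n) = c(n) − b(n), where for n ≥ 1, b(n) (respectively c(n)) is one more than the position (indexed from 0) of the n-th occurrence of the symbol 1 (respectively 2) in the infinite Tribonacci word TR, and b(0) = c(0) = 0. -/
import Mathlib

open Classical

/-- The pair of sequences OEIS A140100 / A140101, defined greedily:
`XY 0 = (0,0)`, `XY 1 = (1,2)`, and for `n > 1`, `XY n = (x, y)` where `x` is least
(and then `y` least) such that `0 < x < y`, neither `x` nor `y` occurs among the earlier
`X`- or `Y`-values with index `1 ≤ k < n`, and `y - x` occurs among neither the earlier
differences `Y k - X k` nor the earlier sums `Y k + X k`. -/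
noncomputable def XY : ℕ → ℕ × ℕ
  | 0 => (0, 0)
  | 1 => (1, 2)
  | n + 2 =>
      let P : ℕ → ℕ → Prop := fun x y =>
        0 < x ∧ x < y ∧
        ∀ k, 1 ≤ k → k < n + 2 →
          (XY k).1 ≠ x ∧ (XY k).1 ≠ y ∧ (XY k).2 ≠ x ∧ (XY k).2 ≠ y ∧
          (XY k).2 - (XY k).1 ≠ y - x ∧ (XY k).2 + (XY k).1 ≠ y - x
      let x := sInf {x | ∃ y, P x y}
      (x, sInf {y | P x y})
  termination_by n => n
  decreasing_by all_goals omega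

/-- Sequence OEIS A140100. -/
noncomputable def X (n : ℕ) : ℕ := (XY n).1

/-- Sequence OEIS A140101. -/
noncomputable def Y (n : ℕ) : ℕ := (XY n).2

/-- The morphism 0 ↦ 01, 1 ↦ 02, 2 ↦ 0. -/
def tribMorph : ℕ → List ℕ
  | 0 => [0, 1]
  | 1 => [0, 2]
  | _ => [0]

/-- The infinite Tribonacci word TR = 0102010010201⋯, the fixed point of the
morphism 0 ↦ 01, 1 ↦ 02, 2 ↦ 0 starting with 0. -/
def TR (n : ℕ) : ℕ := ((fun l : List ℕ => (l.map tribMorph).flatten)^[n + 1] [0]).getD n 0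

/-- For `n ≥ 1`, one more than the position (indexed from 0) of the `n`-th occurrence
of the symbol `s` in TR; and `0` at `n = 0`. -/
noncomputable def posSeq (s : ℕ) (n : ℕ) : ℕ :=
  if n = 0 then 0 else Nat.nth (fun m => TR m = s) (n - 1) + 1

def phiApp (l : List ℕ) : List ℕ := (l.map tribMorph).flatten
def W (k : ℕ) : List ℕ := phiApp^[k] [0]
lemma W_succ (k : ℕ) : W (k+1) = phiApp (W k) := Function.iterate_succ_apply' _ _ _
lemma phiApp_append (u v : List ℕ) : phiApp (u ++ v) = phiApp u ++ phiApp v := by simp [phiApp]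
lemma phiApp_cons (a : ℕ) (t : List ℕ) : phiApp (a :: t) = tribMorph a ++ phiApp t := by simp [phiApp]
lemma prefix_phiApp {u v : List ℕ} (h : u <+: v) : phiApp u <+: phiApp v := by
  obtain ⟨t, rfl⟩ := h; exact ⟨phiApp t, (phiApp_append u t).symm⟩
lemma wt_pos (c : ℕ) : 1 ≤ (tribMorph c).length := by
  match c with
  | 0 => simp [tribMorph]
  | 1 => simp [tribMorph]
  | (n+2) => simp [tribMorph]
lemma wt_le (c : ℕ) : (tribMorph c).length ≤ 2 := by
  match c with
  | 0 => simp [tribMorph]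
  | 1 => simp [tribMorph]
  | (n+2) => simp [tribMorph]
lemma length_phiApp (w : List ℕ) : w.length ≤ (phiApp w).length := by
  induction w with
  | nil => simp [phiApp]
  | cons a t ih =>
      rw [phiApp_cons, List.length_append, List.length_cons]
      have := wt_pos a; omega
lemma W_head (k : ℕ) : ∃ t, W k = 0 :: t := by
  induction k with
  | zero => exact ⟨[], rfl⟩
  | succ k ih =>
      obtain ⟨t, ht⟩ := ih
      exact ⟨1 :: phiApp t, by rw [W_succ, ht, phiApp_cons]; rfl⟩
lemma length_W (k : ℕ) : k + 1 ≤ (W k).length := by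
  induction k with
  | zero => simp [W]
  | succ k ih =>
      obtain ⟨t, ht⟩ := W_head k
      rw [W_succ, ht, phiApp_cons]
      have h2 := length_phiApp t
      have : (W k).length = t.length + 1 := by rw [ht]; simp
      simp only [tribMorph, List.length_append, List.length_cons]
      omega
lemma W_prefix_succ (k : ℕ) : W k <+: W (k+1) := by
  induction k with
  | zero => exact ⟨[1], rfl⟩
  | succ k ih =>
      have : W (k+1+1) = phiApp (W (k+1)) := W_succ (k+1)
      rw [W_succ k, this]; exact prefix_phiApp ih
lemma W_prefix {j k : ℕ} (h : j ≤ k) : W j <+: W k := by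
  induction k with
  | zero => simp_all
  | succ k ih =>
      rcases Nat.eq_or_lt_of_le h with rfl | h'
      · exact List.prefix_refl _
      · exact (ih (by omega)).trans (W_prefix_succ k)
lemma getD_prefix {u v : List ℕ} (h : u <+: v) {n : ℕ} (hn : n < u.length) :
    v.getD n 0 = u.getD n 0 := by
  obtain ⟨t, rfl⟩ := h
  rw [List.getD_eq_getElem?_getD, List.getD_eq_getElem?_getD, List.getElem?_append, if_pos hn]
lemma TR_eq_W {k n : ℕ} (hn : n < (W k).length) : TR n = (W k).getD n 0 := by
  have h1 : n < (W (n+1)).length := by have := length_W (n+1); omega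
  have : TR n = (W (n+1)).getD n 0 := rfl
  rw [this]
  rcases le_total k (n+1) with h | h
  · exact getD_prefix (W_prefix h) hn
  · exact (getD_prefix (W_prefix h) h1).symm
lemma mem_W_lt {k c : ℕ} (hc : c ∈ W k) : c < 3 := by
  induction k with
  | zero => simp [W] at hc; omega
  | succ k ih =>
      rw [W_succ, phiApp, List.mem_flatten] at hc
      obtain ⟨l, hl, hcl⟩ := hc
      rw [List.mem_map] at hl
      obtain ⟨a, _, rfl⟩ := hl
      match a with
      | 0 => simp [tribMorph] at hcl; omega
      | 1 => simp [tribMorph] at hcl; omega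
      | (n+2) => simp [tribMorph] at hcl; omega
lemma TR_lt (n : ℕ) : TR n < 3 := by
  have h1 : n < (W (n+1)).length := by have := length_W (n+1); omega
  have : TR n = (W (n+1)).getD n 0 := rfl
  rw [this, List.getD_eq_getElem?_getD, List.getElem?_eq_getElem h1]
  exact mem_W_lt (List.getElem_mem h1)

noncomputable def p : ℕ → ℕ
  | 0 => 0
  | n+1 => p n + (tribMorph (TR n)).length

lemma p_succ (n : ℕ) : p (n+1) = p n + (tribMorph (TR n)).length := rfl

noncomputable def bs (w : List ℕ) (j : ℕ) : ℕ := (phiApp (w.take j)).length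

lemma bs_zero (w : List ℕ) : bs w 0 = 0 := by simp [bs, phiApp]

lemma bs_succ (w : List ℕ) (j : ℕ) (hj : j < w.length) :
    bs w (j+1) = bs w j + (tribMorph (w.getD j 0)).length := by
  have : w.take (j+1) = w.take j ++ [w[j]] := by
    rw [List.take_succ, List.getElem?_eq_getElem hj]; rfl
  rw [bs, this, phiApp_append, List.length_append, bs]
  congr 1
  rw [List.getD_eq_getElem?_getD, List.getElem?_eq_getElem hj]
  simp [phiApp]

lemma p_eq_bs {k n : ℕ} (hn : n ≤ (W k).length) : p n = bs (W k) n := by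
  induction n with
  | zero => simp [p, bs_zero]
  | succ n ih =>
      rw [p_succ, bs_succ _ _ (by omega), ih (by omega),
        TR_eq_W (show n < (W k).length by omega)]

lemma bs_le {w : List ℕ} {j : ℕ} (hj : j ≤ w.length) : bs w j ≤ (phiApp w).length :=
  (prefix_phiApp (List.take_prefix j w)).length_le

lemma getD_phiApp_block :
    ∀ (w : List ℕ) (j i : ℕ), j < w.length → i < (tribMorph (w.getD j 0)).length →
    (phiApp w).getD (bs w j + i) 0 = (tribMorph (w.getD j 0)).getD i 0 := by
  intro w
  induction w with
  | nil => intro j i hj; simp at hj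
  | cons a t ih =>
      intro j i hj hi
      match j with
      | 0 =>
          rw [phiApp_cons]
          simp only [List.getD_cons_zero] at hi ⊢
          rw [bs_zero, Nat.zero_add, List.getD_eq_getElem?_getD, List.getElem?_append,
            if_pos hi, ← List.getD_eq_getElem?_getD]
      | j+1 =>
          simp only [List.length_cons] at hj
          simp only [List.getD_cons_succ] at hi ⊢
          have hbs : bs (a :: t) (j+1) = (tribMorph a).length + bs t j := by
            simp only [bs, List.take_succ_cons, phiApp_cons, List.length_append]
          rw [phiApp_cons, hbs, Nat.add_assoc, List.getD_eq_getElem?_getD,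
            List.getElem?_append_right (by omega), Nat.add_sub_cancel_left,
            ← List.getD_eq_getElem?_getD]
          exact ih j i (by omega) hi

lemma TR_block (n i : ℕ) (hi : i < (tribMorph (TR n)).length) :
    TR (p n + i) = (tribMorph (TR n)).getD i 0 := by
  set k := n + 1 with hk
  have hnk : n < (W k).length := by have := length_W k; omega
  have hTR : TR n = (W k).getD n 0 := TR_eq_W hnk
  have hlt : p n + i < (W (k+1)).length := by
    have h1 : p n + i < bs (W k) (n+1) := by
      rw [bs_succ _ _ hnk, ← p_eq_bs (le_of_lt hnk), ← hTR]; omega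
    have h2 : bs (W k) (n+1) ≤ (phiApp (W k)).length := bs_le (by omega)
    rw [W_succ]; omega
  rw [TR_eq_W hlt, W_succ, p_eq_bs (le_of_lt hnk)]
  rw [hTR] at hi ⊢
  exact getD_phiApp_block (W k) n i hnk hi

-- trichotomy helper
lemma TR_cases (n : ℕ) : TR n = 0 ∨ TR n = 1 ∨ TR n = 2 := by have := TR_lt n; omega

lemma wt_TR0 {n : ℕ} (h : TR n = 0) : (tribMorph (TR n)).length = 2 := by rw [h]; rfl
lemma wt_TR1 {n : ℕ} (h : TR n = 1) : (tribMorph (TR n)).length = 2 := by rw [h]; rfl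
lemma wt_TR2 {n : ℕ} (h : TR n = 2) : (tribMorph (TR n)).length = 1 := by rw [h]; rfl

lemma TR_p (n : ℕ) : TR (p n) = 0 := by
  have h := TR_block n 0 (by have := wt_pos (TR n); omega)
  rw [Nat.add_zero] at h
  rcases TR_cases n with h0 | h0 | h0 <;> rw [h0] at h <;> simpa [tribMorph] using h

lemma TR_p1_of_0 {n : ℕ} (h : TR n = 0) : TR (p n + 1) = 1 := by
  have hb := TR_block n 1 (by rw [wt_TR0 h]; omega)
  rw [h] at hb; simpa [tribMorph] using hb

lemma TR_p1_of_1 {n : ℕ} (h : TR n = 1) : TR (p n + 1) = 2 := by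
  have hb := TR_block n 1 (by rw [wt_TR1 h]; omega)
  rw [h] at hb; simpa [tribMorph] using hb

lemma p_lt_succ (n : ℕ) : p n < p (n+1) := by
  rw [p_succ]; have := wt_pos (TR n); omega

lemma p_strictMono : StrictMono p := strictMono_nat_of_lt_succ p_lt_succ

lemma p_cover (m : ℕ) : ∃ n, p n ≤ m ∧ m < p (n+1) := by
  induction m with
  | zero => exact ⟨0, le_refl 0, p_lt_succ 0⟩
  | succ m ih =>
      obtain ⟨n, h1, h2⟩ := ih
      rcases Nat.lt_or_ge (m+1) (p (n+1)) with h | h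
      · exact ⟨n, by omega, h⟩
      · exact ⟨n+1, h, by have := p_lt_succ (n+1); omega⟩

lemma TR_zero_iff (m : ℕ) : TR m = 0 ↔ ∃ n, p n = m := by
  constructor
  · intro h
    obtain ⟨n, h1, h2⟩ := p_cover m
    rw [p_succ] at h2
    rcases Nat.eq_or_lt_of_le h1 with he | hlt
    · exact ⟨n, he⟩
    · exfalso
      have hw := wt_le (TR n)
      have hm : m = p n + 1 := by omega
      rcases TR_cases n with h0 | h0 | h0
      · rw [hm, TR_p1_of_0 h0] at h; omega
      · rw [hm, TR_p1_of_1 h0] at h; omega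
      · rw [wt_TR2 h0] at h2; omega
  · rintro ⟨n, rfl⟩; exact TR_p n

lemma TR_one_iff (m : ℕ) : TR m = 1 ↔ ∃ n, TR n = 0 ∧ p n + 1 = m := by
  constructor
  · intro h
    obtain ⟨n, h1, h2⟩ := p_cover m
    rw [p_succ] at h2
    rcases Nat.eq_or_lt_of_le h1 with he | hlt
    · rw [← he, TR_p n] at h; omega
    · have hw := wt_le (TR n)
      have hm : m = p n + 1 := by omega
      refine ⟨n, ?_, hm.symm⟩
      rcases TR_cases n with h0 | h0 | h0
      · exact h0
      · rw [hm, TR_p1_of_1 h0] at h; omega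
      · rw [wt_TR2 h0] at h2; omega
  · rintro ⟨n, h0, rfl⟩; exact TR_p1_of_0 h0

lemma TR_two_iff (m : ℕ) : TR m = 2 ↔ ∃ n, TR n = 1 ∧ p n + 1 = m := by
  constructor
  · intro h
    obtain ⟨n, h1, h2⟩ := p_cover m
    rw [p_succ] at h2
    rcases Nat.eq_or_lt_of_le h1 with he | hlt
    · rw [← he, TR_p n] at h; omega
    · have hw := wt_le (TR n)
      have hm : m = p n + 1 := by omega
      refine ⟨n, ?_, hm.symm⟩
      rcases TR_cases n with h0 | h0 | h0
      · rw [hm, TR_p1_of_0 h0] at h; omega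
      · exact h0
      · rw [wt_TR2 h0] at h2; omega
  · rintro ⟨n, h0, rfl⟩; exact TR_p1_of_1 h0

lemma TR_one_iff' (m : ℕ) : TR m = 1 ↔ ∃ k, p (p k) + 1 = m := by
  rw [TR_one_iff]
  constructor
  · rintro ⟨n, h0, rfl⟩
    obtain ⟨k, rfl⟩ := (TR_zero_iff n).1 h0
    exact ⟨k, rfl⟩
  · rintro ⟨k, rfl⟩
    exact ⟨p k, TR_p k, rfl⟩

lemma TR_two_iff' (m : ℕ) : TR m = 2 ↔ ∃ k, p (p (p k) + 1) + 1 = m := by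
  rw [TR_two_iff]
  constructor
  · rintro ⟨n, h1, rfl⟩
    obtain ⟨k, rfl⟩ := (TR_one_iff' n).1 h1
    exact ⟨k, rfl⟩
  · rintro ⟨k, rfl⟩
    exact ⟨p (p k) + 1, (TR_one_iff' _).2 ⟨k, rfl⟩, rfl⟩

-- generic nth lemma
lemma nth_eq_of_range (Q : ℕ → Prop) (f : ℕ → ℕ) (hf : StrictMono f)
    (h : ∀ m, Q m ↔ ∃ k, f k = m) (n : ℕ) : Nat.nth Q n = f n := by
  have hcount : Nat.count Q (f n) = n := by
    rw [Nat.count_eq_card_filter_range]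
    have : (Finset.range (f n)).filter Q = (Finset.range n).image f := by
      ext m
      simp only [Finset.mem_filter, Finset.mem_range, Finset.mem_image]
      constructor
      · rintro ⟨hm, hQ⟩
        obtain ⟨k, rfl⟩ := (h m).1 hQ
        exact ⟨k, hf.lt_iff_lt.1 hm, rfl⟩
      · rintro ⟨k, hk, rfl⟩
        exact ⟨hf.lt_iff_lt.2 hk, (h (f k)).2 ⟨k, rfl⟩⟩
    rw [this, Finset.card_image_of_injective _ hf.injective, Finset.card_range]
  have hQ : Q (f n) := (h (f n)).2 ⟨n, rfl⟩
  calc Nat.nth Q n = Nat.nth Q (Nat.count Q (f n)) := by rw [hcount]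
    _ = f n := Nat.nth_count hQ

lemma wt_of_eq {n v : ℕ} (h : TR n = v) (hv : v < 3) :
    (tribMorph (TR n)).length = if v = 2 then 1 else 2 := by
  rw [h]; interval_cases v <;> rfl

lemma p_succ0 {n : ℕ} (h : TR n = 0) : p (n+1) = p n + 2 := by
  rw [p_succ, h]; rfl
lemma p_succ1 {n : ℕ} (h : TR n = 1) : p (n+1) = p n + 2 := by
  rw [p_succ, h]; rfl
lemma p_succ2 {n : ℕ} (h : TR n = 2) : p (n+1) = p n + 1 := by
  rw [p_succ, h]; rfl

-- letters inside second-level blocks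
lemma TR_pp (n : ℕ) : TR (p (p n)) = 0 := TR_p (p n)
lemma TR_pp1 (n : ℕ) : TR (p (p n) + 1) = 1 := TR_p1_of_0 (TR_p n)
lemma p_pn1 (n : ℕ) : p (p n + 1) = p (p n) + 2 := by
  rw [p_succ (p n)]  -- p (p n + 1) = p (p n) + wt (TR (p n))
  rw [TR_p n]; rfl

lemma step2 {n : ℕ} (h : TR n = 2) :
    p (p (n+1)) = p (p n) + 2 ∧ p (p (p (n+1))) = p (p (p n)) + 4 := by
  have h1 : p (n+1) = p n + 1 := p_succ2 h
  have h2 : p (p (n+1)) = p (p n) + 2 := by rw [h1, p_pn1]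
  refine ⟨h2, ?_⟩
  rw [h2]
  have e1 : p (p (p n) + 1) = p (p (p n)) + 2 := by
    rw [p_succ, TR_pp n]; rfl
  have e2 : p (p (p n) + 2) = p (p (p n) + 1) + 2 := by
    rw [p_succ, TR_pp1 n]; rfl
  omega

lemma step1 {n : ℕ} (h : TR n = 1) :
    p (p (n+1)) = p (p n) + 3 ∧ TR (p (p n) + 2) = 0 ∧
      p (p (p (n+1))) = p (p (p n)) + 6 := by
  have h1 : p (n+1) = p n + 2 := p_succ1 h
  have hl : TR (p n + 1) = 2 := TR_p1_of_1 h
  have e1 : p (p n + 1) = p (p n) + 2 := p_pn1 n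
  have e2 : p (p n + 2) = p (p n + 1) + 1 := by
    rw [p_succ (p n + 1), hl]; rfl
  have h2 : p (p (n+1)) = p (p n) + 3 := by rw [h1]; omega
  have hTR2 : TR (p (p n) + 2) = 0 := by
    have := TR_p (p n + 1); rwa [e1] at this
  refine ⟨h2, hTR2, ?_⟩
  rw [h2]
  have f1 : p (p (p n) + 1) = p (p (p n)) + 2 := by rw [p_succ, TR_pp n]; rfl
  have f2 : p (p (p n) + 2) = p (p (p n) + 1) + 2 := by rw [p_succ, TR_pp1 n]; rfl
  have f3 : p (p (p n) + 3) = p (p (p n) + 2) + 2 := by rw [p_succ, hTR2]; rfl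
  omega

lemma step0 {n : ℕ} (h : TR n = 0) :
    p (p (n+1)) = p (p n) + 4 ∧ TR (p (p n) + 2) = 0 ∧ TR (p (p n) + 3) = 2 ∧
      p (p (p (n+1))) = p (p (p n)) + 7 := by
  have h1 : p (n+1) = p n + 2 := p_succ0 h
  have hl : TR (p n + 1) = 1 := TR_p1_of_0 h
  have e1 : p (p n + 1) = p (p n) + 2 := p_pn1 n
  have e2 : p (p n + 2) = p (p n + 1) + 2 := by
    rw [p_succ (p n + 1), hl]; rfl
  have h2 : p (p (n+1)) = p (p n) + 4 := by rw [h1]; omega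
  have hTR2 : TR (p (p n) + 2) = 0 := by
    have := TR_p (p n + 1); rwa [e1] at this
  have hTR3 : TR (p (p n) + 3) = 2 := by
    have := TR_p1_of_1 hl; rwa [e1] at this
  refine ⟨h2, hTR2, hTR3, ?_⟩
  rw [h2]
  have f1 : p (p (p n) + 1) = p (p (p n)) + 2 := by rw [p_succ, TR_pp n]; rfl
  have f2 : p (p (p n) + 2) = p (p (p n) + 1) + 2 := by rw [p_succ, TR_pp1 n]; rfl
  have f3 : p (p (p n) + 3) = p (p (p n) + 2) + 2 := by rw [p_succ, hTR2]; rfl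
  have f4 : p (p (p n) + 4) = p (p (p n) + 3) + 1 := by rw [p_succ, hTR3]; rfl
  omega

noncomputable def xs : ℕ → ℕ
  | 0 => 1
  | n+1 => xs n + (if TR n = 0 then 2 else 1)
noncomputable def ys : ℕ → ℕ
  | 0 => 2
  | n+1 => ys n + (if TR n = 2 then 2 else 3)
noncomputable def Ds : ℕ → ℕ
  | 0 => 1
  | n+1 => Ds n + (if TR n = 1 then 2 else 1)
noncomputable def Ss : ℕ → ℕ
  | 0 => 3
  | n+1 => Ss n + (5 - TR n)

lemma xs_succ (n : ℕ) : xs (n+1) = xs n + (if TR n = 0 then 2 else 1) := rfl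
lemma ys_succ (n : ℕ) : ys (n+1) = ys n + (if TR n = 2 then 2 else 3) := rfl
lemma Ds_succ (n : ℕ) : Ds (n+1) = Ds n + (if TR n = 1 then 2 else 1) := rfl
lemma Ss_succ (n : ℕ) : Ss (n+1) = Ss n + (5 - TR n) := rfl

lemma xs_strictMono : StrictMono xs := by
  apply strictMono_nat_of_lt_succ
  intro n; rw [xs_succ]; split <;> omega
lemma ys_strictMono : StrictMono ys := by
  apply strictMono_nat_of_lt_succ
  intro n; rw [ys_succ]; split <;> omega
lemma Ds_strictMono : StrictMono Ds := by
  apply strictMono_nat_of_lt_succ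
  intro n; rw [Ds_succ]; split <;> omega
lemma Ss_strictMono : StrictMono Ss := by
  apply strictMono_nat_of_lt_succ
  intro n; rw [Ss_succ]; have := TR_lt n; omega

lemma xs_pos (n : ℕ) : 1 ≤ xs n := by
  induction n with
  | zero => exact le_refl 1
  | succ n ih => rw [xs_succ]; split <;> omega
lemma Ds_pos (n : ℕ) : 1 ≤ Ds n := by
  induction n with
  | zero => exact le_refl 1
  | succ n ih => rw [Ds_succ]; split <;> omega

lemma ys_eq (n : ℕ) : ys n = xs n + Ds n := by
  induction n with
  | zero => rfl
  | succ n ih =>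
      rw [ys_succ, xs_succ, Ds_succ, ih]
      rcases TR_cases n with h | h | h <;> simp [h] <;> omega
lemma Ss_eq (n : ℕ) : Ss n = xs n + ys n := by
  induction n with
  | zero => rfl
  | succ n ih =>
      rw [Ss_succ, xs_succ, ys_succ, ih]
      rcases TR_cases n with h | h | h <;> rw [h] <;> simp <;> omega

lemma xs_lt_ys (n : ℕ) : xs n < ys n := by
  rw [ys_eq]; have := Ds_pos n; omega
lemma Ds_lt_Ss (n : ℕ) : Ds n < Ss n := by
  rw [Ss_eq, ys_eq]; have := xs_pos n; omega

-- key identity 1 : xs (p n) + 1 = ys n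
lemma xs_p (n : ℕ) : xs (p n) + 1 = ys n := by
  induction n with
  | zero => rfl
  | succ n ih =>
      rw [ys_succ, ← ih]
      rcases TR_cases n with h | h | h
      · rw [p_succ0 h]
        have e1 : xs (p n + 1) = xs (p n) + 2 := by rw [xs_succ, TR_p n]; simp
        have e2 : xs (p n + 2) = xs (p n + 1) + 1 := by
          rw [xs_succ, TR_p1_of_0 h]; simp
        have hdy : (if TR n = 2 then (2:ℕ) else 3) = 3 := by rw [h]; simp
        rw [hdy]; omega
      · rw [p_succ1 h]
        have e1 : xs (p n + 1) = xs (p n) + 2 := by rw [xs_succ, TR_p n]; simp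
        have e2 : xs (p n + 2) = xs (p n + 1) + 1 := by
          rw [xs_succ, TR_p1_of_1 h]; simp
        have hdy : (if TR n = 2 then (2:ℕ) else 3) = 3 := by rw [h]; simp
        rw [hdy]; omega
      · rw [p_succ2 h]
        have e1 : xs (p n + 1) = xs (p n) + 2 := by rw [xs_succ, TR_p n]; simp
        have hdy : (if TR n = 2 then (2:ℕ) else 3) = 2 := by rw [h]; simp
        rw [hdy]; omega

-- key identity 2 : ys n + p (p n) = p (p (p n)) + 2
lemma ys_p (n : ℕ) : ys n + p (p n) = p (p (p n)) + 2 := by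
  induction n with
  | zero => rfl
  | succ n ih =>
      rw [ys_succ]
      rcases TR_cases n with h | h | h
      · obtain ⟨h2, -, -, h3⟩ := step0 h
        have hdy : (if TR n = 2 then (2:ℕ) else 3) = 3 := by rw [h]; simp
        rw [h3, h2, hdy]; omega
      · obtain ⟨h2, -, h3⟩ := step1 h
        have hdy : (if TR n = 2 then (2:ℕ) else 3) = 3 := by rw [h]; simp
        rw [h3, h2, hdy]; omega
      · obtain ⟨h2, h3⟩ := step2 h
        have hdy : (if TR n = 2 then (2:ℕ) else 3) = 2 := by rw [h]; simp
        rw [h3, h2, hdy]; omega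

-- key identity 3 : Ss k = Ds (p (p k) + 1) + 1
lemma Ss_D (k : ℕ) : Ss k = Ds (p (p k) + 1) + 1 := by
  induction k with
  | zero => rfl
  | succ k ih =>
      rw [Ss_succ, ih]
      rcases TR_cases k with h | h | h
      · obtain ⟨h2, hA, hB, -⟩ := step0 h
        rw [h2]
        have e1 : Ds (p (p k) + 2) = Ds (p (p k) + 1) + 2 := by
          rw [Ds_succ, TR_pp1 k]; simp
        have e2 : Ds (p (p k) + 3) = Ds (p (p k) + 2) + 1 := by
          rw [Ds_succ, hA]; simp
        have e3 : Ds (p (p k) + 4) = Ds (p (p k) + 3) + 1 := by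
          rw [Ds_succ, hB]; simp
        have e4 : Ds (p (p k) + 5) = Ds (p (p k) + 4) + 1 := by
          rw [Ds_succ]
          have : TR (p (p k) + 4) = 0 := by
            have := TR_pp (k+1); rwa [h2] at this
          rw [this]; simp
        have : p (p k) + 4 + 1 = p (p k) + 5 := by omega
        rw [this, h]; omega
  -- remaining cases below
      · obtain ⟨h2, hA, -⟩ := step1 h
        rw [h2]
        have e1 : Ds (p (p k) + 2) = Ds (p (p k) + 1) + 2 := by
          rw [Ds_succ, TR_pp1 k]; simp
        have e2 : Ds (p (p k) + 3) = Ds (p (p k) + 2) + 1 := by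
          rw [Ds_succ, hA]; simp
        have e3 : Ds (p (p k) + 4) = Ds (p (p k) + 3) + 1 := by
          rw [Ds_succ]
          have : TR (p (p k) + 3) = 0 := by
            have := TR_pp (k+1); rwa [h2] at this
          rw [this]; simp
        have : p (p k) + 3 + 1 = p (p k) + 4 := by omega
        rw [this, h]; omega
      · obtain ⟨h2, -⟩ := step2 h
        rw [h2]
        have e1 : Ds (p (p k) + 2) = Ds (p (p k) + 1) + 2 := by
          rw [Ds_succ, TR_pp1 k]; simp
        have e2 : Ds (p (p k) + 3) = Ds (p (p k) + 2) + 1 := by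
          rw [Ds_succ]
          have : TR (p (p k) + 2) = 0 := by
            have := TR_pp (k+1); rwa [h2] at this
          rw [this]; simp
        have : p (p k) + 2 + 1 = p (p k) + 3 := by omega
        rw [this, h]; omega

-- generic cover lemmas
lemma cover_f (f : ℕ → ℕ) (h0 : f 0 = 1)
    (hstep : ∀ n, f (n+1) = f n + 1 ∨ f (n+1) = f n + 2) :
    ∀ N, 1 ≤ N → (∃ n, f n = N) ∨ ∃ n, f (n+1) = f n + 2 ∧ f n + 1 = N := by
  intro N
  induction N with
  | zero => omega
  | succ N ih =>
      intro _
      rcases Nat.eq_or_lt_of_le (show 1 ≤ N + 1 by omega) with h1 | h1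
      · exact Or.inl ⟨0, by omega⟩
      · rcases ih (by omega) with ⟨n, hn⟩ | ⟨n, hn2, hn⟩
        · rcases hstep n with h | h
          · exact Or.inl ⟨n+1, by omega⟩
          · exact Or.inr ⟨n, h, by omega⟩
        · exact Or.inl ⟨n+1, by omega⟩

lemma skip_not {f : ℕ → ℕ} (hmono : StrictMono f) {n : ℕ}
    (h2 : f (n+1) = f n + 2) (m : ℕ) : f m ≠ f n + 1 := by
  rcases le_or_gt m n with h | h
  · have := hmono.monotone h; omega
  · have := hmono.monotone (show n + 1 ≤ m by omega); omega

lemma xs_step (n : ℕ) : xs (n+1) = xs n + 1 ∨ xs (n+1) = xs n + 2 := by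
  rw [xs_succ]; split <;> omega
lemma Ds_step (n : ℕ) : Ds (n+1) = Ds n + 1 ∨ Ds (n+1) = Ds n + 2 := by
  rw [Ds_succ]; split <;> omega

lemma xs_ys_cover (N : ℕ) (hN : 1 ≤ N) : (∃ n, xs n = N) ∨ (∃ k, ys k = N) := by
  rcases cover_f xs rfl xs_step N hN with h | ⟨n, h2, hn⟩
  · exact Or.inl h
  · right
    have hTR : TR n = 0 := by
      by_contra hc
      rw [xs_succ, if_neg hc] at h2; omega
    obtain ⟨k, rfl⟩ := (TR_zero_iff n).1 hTR
    exact ⟨k, by rw [← xs_p k]; omega⟩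

lemma ys_not_xs (m k : ℕ) : xs m ≠ ys k := by
  rw [← xs_p k]
  apply skip_not xs_strictMono
  rw [xs_succ, if_pos (TR_p k)]

lemma Ds_Ss_cover (d : ℕ) (hd : 1 ≤ d) : (∃ n, Ds n = d) ∨ (∃ k, Ss k = d) := by
  rcases cover_f Ds rfl Ds_step d hd with h | ⟨n, h2, hn⟩
  · exact Or.inl h
  · right
    have hTR : TR n = 1 := by
      by_contra hc
      rw [Ds_succ, if_neg hc] at h2; omega
    obtain ⟨k, rfl⟩ := (TR_one_iff' n).1 hTR
    exact ⟨k, by rw [Ss_D k]; omega⟩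

lemma Ss_not_Ds (m k : ℕ) : Ds m ≠ Ss k := by
  rw [Ss_D k]
  apply skip_not Ds_strictMono
  rw [Ds_succ, if_pos (TR_pp1 k)]

-- posSeq formulas
lemma pp1_strictMono : StrictMono (fun k => p (p k) + 1) := by
  intro a b h
  simp only [Nat.add_lt_add_iff_right]
  exact p_strictMono (p_strictMono h)

lemma ppp1_strictMono : StrictMono (fun k => p (p (p k) + 1) + 1) := by
  intro a b h
  simp only [Nat.add_lt_add_iff_right]
  exact p_strictMono (Nat.add_lt_add_right (p_strictMono (p_strictMono h)) 1)

lemma posSeq1_succ (n : ℕ) : posSeq 1 (n+1) = p (p n) + 2 := by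
  rw [posSeq, if_neg (Nat.succ_ne_zero n), Nat.add_sub_cancel,
    nth_eq_of_range _ (fun k => p (p k) + 1) pp1_strictMono TR_one_iff' n]

lemma posSeq2_succ (n : ℕ) : posSeq 2 (n+1) = p (p (p n)) + 4 := by
  rw [posSeq, if_neg (Nat.succ_ne_zero n), Nat.add_sub_cancel,
    nth_eq_of_range _ (fun k => p (p (p k) + 1) + 1) ppp1_strictMono TR_two_iff' n]
  have := p_pn1 (p n)
  omega

-- abstract sequence facts (proved elsewhere)
def Q (n : ℕ) (x y : ℕ) : Prop :=
  0 < x ∧ x < y ∧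
  ∀ k, 1 ≤ k → k < n + 2 →
    (XY k).1 ≠ x ∧ (XY k).1 ≠ y ∧ (XY k).2 ≠ x ∧ (XY k).2 ≠ y ∧
    (XY k).2 - (XY k).1 ≠ y - x ∧ (XY k).2 + (XY k).1 ≠ y - x

lemma XY_unfold (n : ℕ) :
    XY (n+2) = (sInf {x | ∃ y, Q n x y}, sInf {y | Q n (sInf {x | ∃ y, Q n x y}) y}) := by
  rw [XY]; rfl

theorem XY_eq : ∀ n, XY (n+1) = (xs n, ys n) := by
  intro n
  induction n using Nat.strong_induction_on with
  | _ n IH =>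
    match n with
    | 0 => rw [XY]; rfl
    | m + 1 =>
      -- earlier values
      have h_used : ∀ k, 1 ≤ k → k < m + 2 → XY k = (xs (k-1), ys (k-1)) := by
        intro k hk1 hk2
        have : k = (k-1) + 1 := by omega
        rw [this]
        exact IH (k-1) (by omega)
      -- membership of the intended pair
      have hQmem : Q m (xs (m+1)) (ys (m+1)) := by
        refine ⟨xs_pos (m+1), xs_lt_ys (m+1), ?_⟩
        intro k hk1 hk2
        rw [h_used k hk1 hk2]
        set j := k - 1 with hj
        have hjm : j < m + 1 := by omega
        have hys_sub : ys j - xs j = Ds j := by rw [ys_eq]; omega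
        have hys_add : ys j + xs j = Ss j := by rw [Ss_eq]; omega
        have hcand : ys (m+1) - xs (m+1) = Ds (m+1) := by rw [ys_eq]; omega
        refine ⟨ne_of_lt (xs_strictMono hjm), ys_not_xs j (m+1),
          fun h => ys_not_xs (m+1) j h.symm, ne_of_lt (ys_strictMono hjm), ?_, ?_⟩
        · rw [hys_sub, hcand]
          exact ne_of_lt (Ds_strictMono hjm)
        · rw [hys_add, hcand]
          exact fun h => Ss_not_Ds (m+1) j h.symm
      -- no smaller x admissible
      have hQlow : ∀ x', x' < xs (m+1) → ¬ ∃ y, Q m x' y := by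
        rintro x' hx' ⟨y, hy⟩
        obtain ⟨hpos, hlt, hall⟩ := hy
        rcases xs_ys_cover x' (by omega) with ⟨j, hj⟩ | ⟨j, hj⟩
        · have hjm : j < m + 1 := xs_strictMono.lt_iff_lt.mp (by omega)
          have := (hall (j+1) (by omega) (by omega)).1
          rw [h_used (j+1) (by omega) (by omega)] at this
          simp only [Nat.add_sub_cancel] at this
          exact this hj
        · have hjm : j < m + 1 := by
            have h1 : ys j < ys (m+1) := by
              have := xs_lt_ys (m+1); omega
            exact ys_strictMono.lt_iff_lt.mp h1
          have := (hall (j+1) (by omega) (by omega)).2.2.1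
          rw [h_used (j+1) (by omega) (by omega)] at this
          simp only [Nat.add_sub_cancel] at this
          exact this hj
      -- x-component
      have hxinf : sInf {x | ∃ y, Q m x y} = xs (m+1) := by
        have hne : {x | ∃ y, Q m x y}.Nonempty := ⟨xs (m+1), ys (m+1), hQmem⟩
        refine le_antisymm (Nat.sInf_le ⟨ys (m+1), hQmem⟩) ?_
        by_contra hcon
        push_neg at hcon
        exact hQlow _ hcon (Nat.sInf_mem hne)
      -- y-component
      have hYlow : ∀ y', y' < ys (m+1) → ¬ Q m (xs (m+1)) y' := by
        intro y' hy' hQ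
        obtain ⟨hpos, hlt, hall⟩ := hQ
        set d := y' - xs (m+1) with hd
        have hd1 : 1 ≤ d := by omega
        have hdlt : d < Ds (m+1) := by
          have := ys_eq (m+1); omega
        rcases Ds_Ss_cover d hd1 with ⟨j, hj⟩ | ⟨j, hj⟩
        · have hjm : j < m + 1 := Ds_strictMono.lt_iff_lt.mp (by omega)
          have := (hall (j+1) (by omega) (by omega)).2.2.2.2.1
          rw [h_used (j+1) (by omega) (by omega)] at this
          simp only [Nat.add_sub_cancel] at this
          apply this
          rw [show ys j - xs j = Ds j from by rw [ys_eq]; omega]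
          omega
        · have hjm : j < m + 1 := by
            have h1 : Ss j < Ss (m+1) := by
              have := Ds_lt_Ss (m+1); omega
            exact Ss_strictMono.lt_iff_lt.mp h1
          have := (hall (j+1) (by omega) (by omega)).2.2.2.2.2
          rw [h_used (j+1) (by omega) (by omega)] at this
          simp only [Nat.add_sub_cancel] at this
          apply this
          rw [show ys j + xs j = Ss j from by rw [Ss_eq]; omega]
          omega
      have hyinf : sInf {y | Q m (xs (m+1)) y} = ys (m+1) := by
        have hne : {y | Q m (xs (m+1)) y}.Nonempty := ⟨ys (m+1), hQmem⟩
        refine le_antisymm (Nat.sInf_le hQmem) ?_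
        by_contra hcon
        push_neg at hcon
        exact hYlow _ hcon (Nat.sInf_mem hne)
      rw [XY_unfold m, hxinf, hyinf]

theorem Y_eq_c_sub_b (n : ℕ) : (Y n : ℤ) = (posSeq 2 n : ℤ) - (posSeq 1 n : ℤ) := by
  match n with
  | 0 =>
      have h0 : XY 0 = (0, 0) := by rw [XY]
      simp [Y, h0, posSeq]
  | n + 1 =>
      have h1 : Y (n+1) = ys n := by rw [Y, XY_eq n]
      rw [h1, posSeq1_succ, posSeq2_succ]
      have := ys_p n
      push_cast
      omega
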